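/- An AL-monoid A is a chain (totally ordered) if and only if A contains no triangle with fixty (no three distinct elements a,b,c with a*b = c, b*c = a, c*a = b). -/
import Mathlib


/-- An Autometrized lattice ordered monoid (AL-monoid). -/
class ALMonoid (A : Type*) extends Lattice A, AddCommMonoid A where
  amul : A → A → A
  add_le_add_left' : ∀ a b : A, a ≤ b → ∀ c : A, c + a ≤ c + b
  amul_core : ∀ a b : A, amul a (a ⊓ b) + b = a ⊔ b
  add_contract : ∀ a x y : A, amul (a + x) (a + y) ≤ amul x y
  sup_contract : ∀ a x y : A, amul (a ⊔ x) (a ⊔ y) ≤ amul x y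
  inf_contract : ∀ a x y : A, amul (a ⊓ x) (a ⊓ y) ≤ amul x y
  amul_contract : ∀ a x y : A, amul (amul a x) (amul a y) ≤ amul x y
  inf_amul_sup : ∀ a b : A, amul a (a ⊔ b) ⊓ amul b (a ⊔ b) = 0
  amul_nonneg : ∀ a b : A, 0 ≤ amul a b
  amul_eq_zero_iff : ∀ a b : A, amul a b = 0 ↔ a = b
  amul_comm : ∀ a b : A, amul a b = amul b a
  amul_triangle : ∀ a b c : A, amul a b ≤ amul a c + amul c b

open ALMonoid

infixl:70 " ⋆ " => ALMonoid.amul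

section Aux

variable {A : Type*} [ALMonoid A]

private lemma al_add_le_add {a b c d : A} (h1 : a ≤ b) (h2 : c ≤ d) : a + c ≤ b + d := by
  calc a + c ≤ a + d := add_le_add_left' c d h2 a
    _ = d + a := add_comm _ _
    _ ≤ d + b := add_le_add_left' a b h1 d
    _ = b + d := add_comm _ _

private lemma al_le_add_right {a c : A} (h : 0 ≤ c) : a ≤ a + c := by
  calc a = a + 0 := (add_zero a).symm
    _ ≤ a + c := add_le_add_left' 0 c h a

private lemma al_star_zero {x : A} (h : 0 ≤ x) : x ⋆ 0 = x := by
  have hc := amul_core x (0 : A)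
  rw [inf_eq_right.mpr h, sup_eq_left.mpr h, add_zero] at hc
  exact hc

private lemma al_zero_star {x : A} (h : 0 ≤ x) : (0 : A) ⋆ x = x := by
  rw [amul_comm]; exact al_star_zero h

private lemma al_core' {x y : A} (h : y ≤ x) : x ⋆ y + y = x := by
  have hc := amul_core x y
  rwa [inf_eq_right.mpr h, sup_eq_left.mpr h] at hc

/-- disjoint nonneg elements: u ⋆ v = u + v. -/
private lemma al_disj_star {u v : A} (hu : 0 ≤ u) (hv : 0 ≤ v) (h : u ⊓ v = 0) :
    u ⋆ v = u + v := by
  have hsup : u + v = u ⊔ v := by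
    have hc := amul_core u v
    rwa [h, al_star_zero hu] at hc
  apply le_antisymm
  · calc u ⋆ v ≤ u ⋆ 0 + 0 ⋆ v := amul_triangle u v 0
      _ = u + v := by rw [al_star_zero hu, al_zero_star hv]
  · rw [hsup]
    apply sup_le
    · have hi := inf_contract u u v
      rwa [inf_idem, h, al_star_zero hu] at hi
    · have hi := inf_contract v u v
      rwa [inf_comm v u, h, inf_idem, al_zero_star hv] at hi

/-- Key cancellation-type lemma. -/
private lemma al_key
    (hsmul : ∀ x y : A, x ⊓ y = 0 → ∀ m n : ℕ, 0 < m → 0 < n → (m • x) ⊓ (n • y) = 0)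
    {a b : A} (ha : 0 ≤ a) (hb : 0 ≤ b) (hab : a ⊓ b = 0) : (a + b) ⋆ b = a := by
  set d := (a + b) ⋆ b with hd
  have hba : b ≤ a + b := by
    calc b = 0 + b := (zero_add b).symm
      _ ≤ a + b := al_add_le_add ha le_rfl
  have hd1 : d + b = a + b := al_core' hba
  have hd2 : d ≤ a := by
    have := add_contract b a 0
    rwa [add_comm b a, add_zero, al_star_zero ha] at this
  set e := a ⋆ d with he
  have he1 : e + d = a := al_core' hd2
  have he0 : 0 ≤ e := amul_nonneg a d
  have hd0 : 0 ≤ d := amul_nonneg _ _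
  have hea : e ≤ a := by
    calc e ≤ e + d := al_le_add_right hd0
      _ = a := he1
  have heb : e ⊓ b = 0 := by
    apply le_antisymm
    · calc e ⊓ b ≤ a ⊓ b := inf_le_inf_right b hea
        _ = 0 := hab
    · exact le_inf he0 hb
  have bound1 : a ⋆ (a + b) ≤ b := by
    have := add_contract a 0 b
    rwa [add_zero, al_zero_star hb] at this
  have bound2 : (a + b) ⋆ d ≤ b := by
    have h2 := add_contract d b 0
    rw [add_zero, al_star_zero hb] at h2
    calc (a + b) ⋆ d = (d + b) ⋆ d := by rw [hd1]
      _ ≤ b := h2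
  have hebb : e ≤ b + b := by
    calc e ≤ a ⋆ (a + b) + (a + b) ⋆ d := amul_triangle a d (a + b)
      _ ≤ b + b := al_add_le_add bound1 bound2
  have h2b : e ⊓ (b + b) = 0 := by
    have := hsmul e b heb 1 2 one_pos two_pos
    rwa [one_nsmul, two_nsmul] at this
  have he0' : e = 0 := by
    rw [← inf_eq_left.mpr hebb]
    exact h2b
  have : a ⋆ d = 0 := by rw [← he, he0']
  have had : a = d := (amul_eq_zero_iff a d).mp this
  exact had.symm

/-- In a chain there is no triangle with fixty: helper. -/
private lemma al_no_tri {x y z : A} (hz : 0 ≤ x) (hxy : x ≤ y) (hyz : y ≤ z)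
    (hne : y ≠ z) (hmul : x ⋆ y = z) : False := by
  have hc : y ⋆ x + x = y := al_core' hxy
  rw [amul_comm, hmul] at hc
  have : z ≤ y := by
    calc z = z + 0 := (add_zero z).symm
      _ ≤ z + x := add_le_add_left' 0 x hz z
      _ = y := hc
  exact hne (le_antisymm hyz this)

end Aux

theorem stmt4 {A : Type*} [ALMonoid A]
    (hsmul : ∀ x y : A, x ⊓ y = 0 → ∀ m n : ℕ, 0 < m → 0 < n → (m • x) ⊓ (n • y) = 0) :
    (∀ x y : A, x ≤ y ∨ y ≤ x) ↔
      ¬ ∃ a b c : A, a ≠ b ∧ b ≠ c ∧ c ≠ a ∧ a ⋆ b = c ∧ b ⋆ c = a ∧ c ⋆ a = b := by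
  constructor
  · rintro h ⟨a, b, c, hab, hbc, hca, f1, f2, f3⟩
    have ha0 : 0 ≤ a := f2 ▸ amul_nonneg b c
    have hb0 : 0 ≤ b := f3 ▸ amul_nonneg c a
    have hc0 : 0 ≤ c := f1 ▸ amul_nonneg a b
    rcases h a b with h1 | h1
    · rcases h b c with h2 | h2
      · exact al_no_tri ha0 h1 h2 hbc f1
      · rcases h a c with h3 | h3
        · -- a ≤ c ≤ b
          exact al_no_tri ha0 h3 h2 (fun h => hbc h.symm) (by rw [amul_comm]; exact f3)
        · -- c ≤ a ≤ b
          exact al_no_tri hc0 h3 h1 hab f3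
    · rcases h a c with h2 | h2
      · -- b ≤ a ≤ c
        exact al_no_tri hb0 h1 h2 (fun h => hca h.symm) (by rw [amul_comm]; exact f1)
      · rcases h b c with h3 | h3
        · -- b ≤ c ≤ a
          exact al_no_tri hb0 h3 h2 hca f2
        · -- c ≤ b ≤ a
          exact al_no_tri hc0 h3 h1 (fun h => hab h.symm) (by rw [amul_comm]; exact f2)
  · intro hno x y
    by_contra hcon
    push_neg at hcon
    obtain ⟨hxy, hyx⟩ := hcon
    set a := x ⋆ (x ⊔ y) with hadef
    set b := y ⋆ (x ⊔ y) with hbdef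
    have hab0 : a ⊓ b = 0 := inf_amul_sup x y
    have ha0 : 0 ≤ a := amul_nonneg _ _
    have hb0 : 0 ≤ b := amul_nonneg _ _
    have hane : a ≠ 0 := by
      intro h
      exact hyx (sup_eq_left.mp ((amul_eq_zero_iff _ _).mp h).symm)
    have hbne : b ≠ 0 := by
      intro h
      exact hxy (sup_eq_right.mp ((amul_eq_zero_iff _ _).mp h).symm)
    apply hno
    refine ⟨a, b, a + b, ?_, ?_, ?_, ?_, ?_, ?_⟩
    · intro h
      exact hane (by rw [← hab0, ← h, inf_idem])
    · intro h
      apply hane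
      have : a ≤ b := by
        calc a = 0 + a := (zero_add a).symm
          _ ≤ b + a := al_add_le_add hb0 le_rfl
          _ = a + b := add_comm _ _
          _ = b := h.symm
      rw [← hab0, inf_eq_left.mpr this]
    · intro h
      apply hbne
      have : b ≤ a := by
        calc b = 0 + b := (zero_add b).symm
          _ ≤ a + b := al_add_le_add ha0 le_rfl
          _ = a := h
      rw [← hab0, inf_eq_right.mpr this]
    · exact al_disj_star ha0 hb0 hab0
    · rw [amul_comm]
      exact al_key hsmul ha0 hb0 hab0
    · have := al_key hsmul hb0 ha0 (by rw [inf_comm]; exact hab0)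
      rwa [add_comm b a] at this
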